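/- Let p : U → (ℝⁿ →ₗ[ℝ] ℝⁿ →ₗ[ℝ] ℝ) be a smooth pairing and A⁺, A⁻ : U → (ℝⁿ →ₗ[ℝ] ℝⁿ →ₗ[ℝ] ℝⁿ) smooth connection forms that are mutually dual with respect to p. Then for every x ∈ U and all v, w, a, b ∈ ℝⁿ: p x (R_{A⁺}(x)(v,w) a) b + p x a (R_{A⁻}(x)(v,w) b) = 0. (Paper's Proposition 3.17: the curvatures of a pair of dual connections pair to zero, in a trivialization.) -/

import Mathlib

noncomputable section

open Set

/-- ℝⁿ. -/
abbrev Vn (n : ℕ) : Type := Fin n → ℝ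

/-- Pairings (fiber metrics pairing `E⁺` with `E⁻`) on the trivialized bundle. -/
abbrev Pairn (n : ℕ) : Type := Vn n →L[ℝ] Vn n →L[ℝ] ℝ

/-- Connection forms on the trivialized bundle. -/
abbrev Connn (n : ℕ) : Type := Vn n →L[ℝ] Vn n →L[ℝ] Vn n

/-- Bundle maps `TU → E±` in the trivialization. -/
abbrev Bdln (n : ℕ) : Type := Vn n →L[ℝ] Vn n

/-- Covariant derivative of the section `ν` along the vector field `X`,
for the connection with connection form `A`. -/
def cov {n : ℕ} (A : Vn n → Connn n) (X ν : Vn n → Vn n) (x : Vn n) : Vn n :=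
  fderiv ℝ ν x (X x) + A x (X x) (ν x)

/-- Lie bracket of vector fields on an open set of ℝⁿ. -/
def lieB {n : ℕ} (X Y : Vn n → Vn n) (x : Vn n) : Vn n :=
  fderiv ℝ Y x (X x) - fderiv ℝ X x (Y x)

/-- The section `Φ±Y : x ↦ Φ± x (Y x)`. -/
def secPhi {n : ℕ} (Φ : Vn n → Bdln n) (Y : Vn n → Vn n) : Vn n → Vn n :=
  fun x => Φ x (Y x)

/-- The induced (possibly degenerate) metric `h x y z = 2 p x (Φ⁺ x y) (Φ⁻ x z)`. -/
def hmet {n : ℕ} (p : Vn n → Pairn n) (Φp Φm : Vn n → Bdln n) (x y z : Vn n) : ℝ :=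
  2 * p x (Φp x y) (Φm x z)

/-- The generalized Amari–Chentsov cubic tensor. -/
def Ctensor {n : ℕ} (p : Vn n → Pairn n) (Ap Am : Vn n → Connn n)
    (Φp Φm : Vn n → Bdln n) (X Y Z : Vn n → Vn n) (x : Vn n) : ℝ :=
  -2 * (p x (cov Ap X (secPhi Φp Y) x) (Φm x (Z x))
        - p x (Φp x (Z x)) (cov Am X (secPhi Φm Y) x))

/-- The relative torsion `T(X,Y) = ∇_X(ΦY) − ∇_Y(ΦX) − Φ[X,Y]`. -/
def Ttor {n : ℕ} (A : Vn n → Connn n) (Φ : Vn n → Bdln n)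
    (X Y : Vn n → Vn n) (x : Vn n) : Vn n :=
  cov A X (secPhi Φ Y) x - cov A Y (secPhi Φ X) x - Φ x (lieB X Y x)

/-- The Kossowski pseudo-connection. -/
def Koss {n : ℕ} (p : Vn n → Pairn n) (Φp Φm : Vn n → Bdln n)
    (X Y Z : Vn n → Vn n) (x : Vn n) : ℝ :=
  fderiv ℝ (fun y => p y (Φp y (Y y)) (Φm y (Z y))) x (X x)
  + fderiv ℝ (fun y => p y (Φp y (Z y)) (Φm y (X y))) x (Y x)
  - fderiv ℝ (fun y => p y (Φp y (X y)) (Φm y (Y y))) x (Z x)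
  - p x (Φp x (X x)) (Φm x (lieB Y Z x))
  + p x (Φp x (Y x)) (Φm x (lieB Z X x))
  + p x (Φp x (Z x)) (Φm x (lieB X Y x))

/-- The curvature of a connection form `A` at `x` in directions `v`, `w`. -/
def curvA {n : ℕ} (A : Vn n → Connn n) (x v w : Vn n) : Vn n →L[ℝ] Vn n :=
  fderiv ℝ A x v w - fderiv ℝ A x w v + (A x v).comp (A x w) - (A x w).comp (A x v)

/-!
Differentiate the duality identity `∂p(v)(a, b) = p(A⁺_v a, b) + p(a, A⁻_v b)` once more in a
direction `w` and antisymmetrize in `v, w`. The second derivative of `p` drops out by symmetry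
of second derivatives; the first derivatives of `p` that remain are eliminated by the duality
identity itself, and what is left is exactly the pairing of the two curvatures.
-/

open Filter Topology

section
variable {𝕜 E F G H : Type*} [NontriviallyNormedField 𝕜]
  [NormedAddCommGroup E] [NormedSpace 𝕜 E] [NormedAddCommGroup F] [NormedSpace 𝕜 F]
  [NormedAddCommGroup G] [NormedSpace 𝕜 G] [NormedAddCommGroup H] [NormedSpace 𝕜 H]
  {x : E}

theorem fderiv_clm_apply_const_apply {c : E → F →L[𝕜] G} (hc : DifferentiableAt 𝕜 c x)
    (u : F) (w : E) : fderiv 𝕜 (fun y => c y u) x w = fderiv 𝕜 c x w u := by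
  simp [fderiv_clm_apply hc (differentiableAt_const u)]

theorem fderiv_clm_apply₂_apply {p : E → F →L[𝕜] G →L[𝕜] H} {f : E → F} {g : E → G}
    (hp : DifferentiableAt 𝕜 p x) (hf : DifferentiableAt 𝕜 f x) (hg : DifferentiableAt 𝕜 g x)
    (w : E) :
    fderiv 𝕜 (fun y => p y (f y) (g y)) x w =
      fderiv 𝕜 p x w (f x) (g x) + p x (fderiv 𝕜 f x w) (g x) + p x (f x) (fderiv 𝕜 g x w) := by
  rw [fderiv_clm_apply (hp.clm_apply hf) hg, fderiv_clm_apply hp hf]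
  simp only [add_apply, ContinuousLinearMap.comp_apply, ContinuousLinearMap.flip_apply]
  abel

theorem fderiv_fderiv_apply_of_dual {p : E → F →L[𝕜] G →L[𝕜] H}
    {Ap : E → E →L[𝕜] F →L[𝕜] F} {Am : E → E →L[𝕜] G →L[𝕜] G} {U : Set E} (hU : U ∈ 𝓝 x)
    (hp : DifferentiableAt 𝕜 p x) (hp' : DifferentiableAt 𝕜 (fderiv 𝕜 p) x)
    (hAp : DifferentiableAt 𝕜 Ap x) (hAm : DifferentiableAt 𝕜 Am x)
    (hdual : ∀ y ∈ U, ∀ v a b, fderiv 𝕜 p y v a b = p y (Ap y v a) b + p y a (Am y v b))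
    (v w : E) (a : F) (b : G) :
    fderiv 𝕜 (fderiv 𝕜 p) x w v a b =
      fderiv 𝕜 p x w (Ap x v a) b + p x (fderiv 𝕜 Ap x w v a) b
        + (fderiv 𝕜 p x w a (Am x v b) + p x a (fderiv 𝕜 Am x w v b)) := by
  have hdual_near : (fun y => fderiv 𝕜 p y v a b)
      =ᶠ[𝓝 x] fun y => p y (Ap y v a) b + p y a (Am y v b) :=
    eventually_of_mem hU fun y hy => hdual y hy v a b
  have hpv : DifferentiableAt 𝕜 (fun y => fderiv 𝕜 p y v) x :=
    DifferentiableAt.clm_apply (c := fderiv 𝕜 p) hp' (differentiableAt_const v)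
  have hApv : DifferentiableAt 𝕜 (fun y => Ap y v) x := hAp.clm_apply (differentiableAt_const v)
  have hAmv : DifferentiableAt 𝕜 (fun y => Am y v) x := hAm.clm_apply (differentiableAt_const v)
  have hApva := hApv.clm_apply (differentiableAt_const a)
  have hAmvb := hAmv.clm_apply (differentiableAt_const b)
  calc fderiv 𝕜 (fderiv 𝕜 p) x w v a b
      = fderiv 𝕜 (fun y => fderiv 𝕜 p y v a b) x w := by
        rw [fderiv_clm_apply_const_apply (hpv.clm_apply (differentiableAt_const a)),
          fderiv_clm_apply_const_apply hpv, fderiv_clm_apply_const_apply hp']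
    _ = fderiv 𝕜 (fun y => p y (Ap y v a) b + p y a (Am y v b)) x w := by
        rw [hdual_near.fderiv_eq]
    _ = _ := by
        rw [fderiv_fun_add ((hp.clm_apply hApva).clm_apply (differentiableAt_const b))
            ((hp.clm_apply (differentiableAt_const a)).clm_apply hAmvb), add_apply,
          fderiv_clm_apply₂_apply hp hApva (differentiableAt_const b),
          fderiv_clm_apply₂_apply hp (differentiableAt_const a) hAmvb,
          fderiv_clm_apply_const_apply hApv, fderiv_clm_apply_const_apply hAp,
          fderiv_clm_apply_const_apply hAmv, fderiv_clm_apply_const_apply hAm]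
        simp only [fderiv_fun_const, Pi.zero_apply, zero_apply, map_zero, add_zero]

end

theorem pairing_curvature_add_eq_zero_of_dual {𝕜 E F G : Type*} [RCLike 𝕜]
    [NormedAddCommGroup E] [NormedSpace 𝕜 E] [NormedAddCommGroup F] [NormedSpace 𝕜 F]
    [NormedAddCommGroup G] [NormedSpace 𝕜 G] {x : E} {U : Set E} (hU : U ∈ 𝓝 x)
    {p : E → F →L[𝕜] G →L[𝕜] 𝕜} {Ap : E → E →L[𝕜] F →L[𝕜] F} {Am : E → E →L[𝕜] G →L[𝕜] G}
    (hp : ContDiffAt 𝕜 2 p x) (hAp : DifferentiableAt 𝕜 Ap x) (hAm : DifferentiableAt 𝕜 Am x)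
    (hdual : ∀ y ∈ U, ∀ v a b, fderiv 𝕜 p y v a b = p y (Ap y v a) b + p y a (Am y v b))
    (v w : E) (a : F) (b : G) :
    p x (fderiv 𝕜 Ap x v w a - fderiv 𝕜 Ap x w v a + Ap x v (Ap x w a) - Ap x w (Ap x v a)) b
      + p x a (fderiv 𝕜 Am x v w b - fderiv 𝕜 Am x w v b + Am x v (Am x w b)
        - Am x w (Am x v b)) = 0 := by
  have hp₁ := hp.differentiableAt two_ne_zero
  have hp₂ := (hp.fderiv_right (m := 1) le_rfl).differentiableAt one_ne_zero
  have hsymm := hp.isSymmSndFDerivAt (by simp [minSmoothness_of_isRCLikeNormedField])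
  have hvw := fderiv_fderiv_apply_of_dual hU hp₁ hp₂ hAp hAm hdual v w a b
  have hwv := fderiv_fderiv_apply_of_dual hU hp₁ hp₂ hAp hAm hdual w v a b
  rw [hsymm.eq] at hvw
  have hx : x ∈ U := mem_of_mem_nhds hU
  simp only [map_sub, map_add, sub_apply, add_apply]
  linear_combination hvw - hwv + hdual x hx w (Ap x v a) b - hdual x hx v (Ap x w a) b
    + hdual x hx w a (Am x v b) - hdual x hx v a (Am x w b)

/-- Paper's Proposition 3.17 (in a trivialization): the curvatures of a pair of
mutually dual connections pair to zero:
`p x (R_{A⁺}(x)(v,w) a) b + p x a (R_{A⁻}(x)(v,w) b) = 0`. -/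
theorem statement11 {n : ℕ} (U : Set (Vn n)) (hUopen : IsOpen U)
    (p : Vn n → Pairn n) (hpsmooth : ContDiffOn ℝ (⊤ : ℕ∞) p U)
    (Ap Am : Vn n → Connn n)
    (hApsmooth : ContDiffOn ℝ (⊤ : ℕ∞) Ap U) (hAmsmooth : ContDiffOn ℝ (⊤ : ℕ∞) Am U)
    (hdual : ∀ x ∈ U, ∀ v a b : Vn n,
      fderiv ℝ p x v a b = p x (Ap x v a) b + p x a (Am x v b)) :
    ∀ x ∈ U, ∀ v w a b : Vn n,
      p x (curvA Ap x v w a) b + p x a (curvA Am x v w b) = 0 := by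
  intro x hx v w a b
  have hU : U ∈ 𝓝 x := hUopen.mem_nhds hx
  have hdiff {A : Vn n → Connn n} (hA : ContDiffOn ℝ (⊤ : ℕ∞) A U) : DifferentiableAt ℝ A x :=
    (hA.contDiffAt hU).differentiableAt (by simp)
  have hp : ContDiffAt ℝ 2 p x := (hpsmooth.contDiffAt hU).of_le (WithTop.coe_le_coe.2 le_top)
  simpa [curvA, map_sub, map_add] using
    pairing_curvature_add_eq_zero_of_dual hU hp (hdiff hApsmooth) (hdiff hAmsmooth) hdual v w a b
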